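/- The piecewise timing map f₀ : [0,T] → [0,2N] defined segmentwise by quintic ease functions with alternating parameters (a_min, a_max) and (a_max, a_min), where a_min = 1-β, a_max = 1+β, β ∈ [0,1], is continuous on [0,T], satisfies f₀(0) = 0 and f₀(T) = 2N, and is continuously differentiable at segment boundaries (the one-sided derivatives match because ease'(1) of one segment equals ease'(0) of the next, up to the alternation: a_max meets a_max and a_min meets a_min). -/

import Mathlib

/-!
On the `i`-th segment `f₀` is `i + ease aᵢ bᵢ ((t - iΔ)/Δ)`. Since `ease a b 0 = 0` and
`ease a b 1 = 1`, neighbouring segments meet at the value `i + 1`. Since `ease' a b 0 = a` and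
`ease' a b 1 = b`, the slope at the right end of segment `i` is `bᵢ/Δ` and at the left end of
segment `i + 1` it is `aᵢ₊₁/Δ`; the alternation of the parameters makes `bᵢ = aᵢ₊₁`.
-/

open Set Filter Topology

noncomputable def ease (a b : ℝ) : ℝ → ℝ :=
  fun τ => a*τ + (-6*a - 4*b + 10)*τ^3 + (8*a + 7*b - 15)*τ^4 + (-3*a - 3*b + 6)*τ^5

noncomputable def easeDeriv (a b τ : ℝ) : ℝ :=
  a + 3*(-6*a - 4*b + 10)*τ^2 + 4*(8*a + 7*b - 15)*τ^3 + 5*(-3*a - 3*b + 6)*τ^4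

lemma hasDerivAt_ease (a b τ : ℝ) : HasDerivAt (ease a b) (easeDeriv a b τ) τ := by
  have h1 := (hasDerivAt_id' τ).const_mul a
  have h3 := (hasDerivAt_pow 3 τ).const_mul (-6*a - 4*b + 10)
  have h4 := (hasDerivAt_pow 4 τ).const_mul (8*a + 7*b - 15)
  have h5 := (hasDerivAt_pow 5 τ).const_mul (-3*a - 3*b + 6)
  refine (((h1.add h3).add h4).add h5).congr_deriv ?_
  simp only [easeDeriv]
  push_cast
  ring

@[simp] lemma ease_zero (a b : ℝ) : ease a b 0 = 0 := by simp [ease]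

@[simp] lemma ease_one (a b : ℝ) : ease a b 1 = 1 := by simp [ease]; ring

@[simp] lemma easeDeriv_zero (a b : ℝ) : easeDeriv a b 0 = a := by simp [easeDeriv]

@[simp] lemma easeDeriv_one (a b : ℝ) : easeDeriv a b 1 = b := by simp [easeDeriv]; ring

section GridPiecewise

variable {Δ : ℝ} {P : ℤ → ℝ → ℝ}

noncomputable def gridPiecewise (Δ : ℝ) (P : ℤ → ℝ → ℝ) (t : ℝ) : ℝ := P ⌊t / Δ⌋ t

lemma floor_div_eq_of_mem_Ico (hΔ : 0 < Δ) {i : ℤ} {t : ℝ}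
    (ht : t ∈ Ico (i * Δ) ((i + 1) * Δ)) : ⌊t / Δ⌋ = i := by
  rw [Int.floor_eq_iff, le_div_iff₀ hΔ, div_lt_iff₀ hΔ]
  exact ht

lemma gridPiecewise_intCast_mul (hΔ : Δ ≠ 0) (i : ℤ) :
    gridPiecewise Δ P (i * Δ) = P i (i * Δ) := by
  simp [gridPiecewise, hΔ]

lemma eqOn_gridPiecewise (hΔ : 0 < Δ) (hP : ∀ i : ℤ, P i ((i + 1) * Δ) = P (i + 1) ((i + 1) * Δ))
    (i : ℤ) : EqOn (gridPiecewise Δ P) (P i) (Icc (i * Δ) ((i + 1) * Δ)) := by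
  intro t ⟨hl, hr⟩
  rcases hr.lt_or_eq with hr | rfl
  · rw [gridPiecewise, floor_div_eq_of_mem_Ico hΔ ⟨hl, hr⟩]
  · have := gridPiecewise_intCast_mul (P := P) hΔ.ne' (i + 1)
    push_cast at this
    rw [this, hP]

lemma gridPiecewise_eventuallyEq_nhdsGE (hΔ : 0 < Δ) {i : ℤ} {x : ℝ}
    (hx : x ∈ Ico (i * Δ) ((i + 1) * Δ)) : gridPiecewise Δ P =ᶠ[𝓝[≥] x] P i := by
  filter_upwards [Ico_mem_nhdsGE hx.2] with t ht
  rw [gridPiecewise, floor_div_eq_of_mem_Ico hΔ ⟨hx.1.trans ht.1, ht.2⟩]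

lemma gridPiecewise_eventuallyEq_nhdsLE (hΔ : 0 < Δ)
    (hP : ∀ i : ℤ, P i ((i + 1) * Δ) = P (i + 1) ((i + 1) * Δ)) {i : ℤ} {x : ℝ}
    (hx : x ∈ Ioc (i * Δ) ((i + 1) * Δ)) : gridPiecewise Δ P =ᶠ[𝓝[≤] x] P i := by
  filter_upwards [Ioc_mem_nhdsLE hx.1] with t ht
  exact eqOn_gridPiecewise hΔ hP i ⟨ht.1.le, ht.2.trans hx.2⟩

lemma continuous_gridPiecewise (hΔ : 0 < Δ)
    (hP : ∀ i : ℤ, P i ((i + 1) * Δ) = P (i + 1) ((i + 1) * Δ)) (hcont : ∀ i, Continuous (P i)) :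
    Continuous (gridPiecewise Δ P) := by
  refine continuous_iff_continuousAt.2 fun x => continuousAt_iff_continuous_left_right.2 ⟨?_, ?_⟩
  · have hx : x ∈ Ioc ((⌈x / Δ⌉ - 1 : ℤ) * Δ) ((⌈x / Δ⌉ - 1 + 1 : ℤ) * Δ) := by
      push_cast
      rw [sub_add_cancel, mem_Ioc, ← lt_div_iff₀ hΔ, ← div_le_iff₀ hΔ]
      exact ⟨by linarith [Int.ceil_lt_add_one (x / Δ)], Int.le_ceil _⟩
    exact (hcont _).continuousWithinAt.congr_of_eventuallyEq_of_mem
      (gridPiecewise_eventuallyEq_nhdsLE hΔ hP (by exact_mod_cast hx)) self_mem_Iic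
  · have hx : x ∈ Ico (⌊x / Δ⌋ * Δ) ((⌊x / Δ⌋ + 1) * Δ) := by
      rw [mem_Ico, ← le_div_iff₀ hΔ, ← div_lt_iff₀ hΔ]
      exact ⟨Int.floor_le _, Int.lt_floor_add_one _⟩
    exact (hcont _).continuousWithinAt.congr_of_eventuallyEq_of_mem
      (gridPiecewise_eventuallyEq_nhdsGE hΔ hx) self_mem_Ici

lemma derivWithin_gridPiecewise_Iic (hΔ : 0 < Δ)
    (hP : ∀ i : ℤ, P i ((i + 1) * Δ) = P (i + 1) ((i + 1) * Δ)) (i : ℤ)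
    (hd : DifferentiableAt ℝ (P (i - 1)) (i * Δ)) :
    derivWithin (gridPiecewise Δ P) (Iic (i * Δ)) (i * Δ) = deriv (P (i - 1)) (i * Δ) := by
  have hx : (i : ℝ) * Δ ∈ Ioc ((i - 1 : ℤ) * Δ) ((i - 1 + 1 : ℤ) * Δ) := by
    push_cast; constructor <;> nlinarith
  rw [(gridPiecewise_eventuallyEq_nhdsLE hΔ hP (by exact_mod_cast hx)).derivWithin_eq_of_mem
    self_mem_Iic, hd.derivWithin (uniqueDiffWithinAt_Iic _)]

lemma derivWithin_gridPiecewise_Ici (hΔ : 0 < Δ) (i : ℤ)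
    (hd : DifferentiableAt ℝ (P i) (i * Δ)) :
    derivWithin (gridPiecewise Δ P) (Ici (i * Δ)) (i * Δ) = deriv (P i) (i * Δ) := by
  have hx : (i : ℝ) * Δ ∈ Ico (i * Δ) ((i + 1) * Δ) := ⟨le_rfl, by nlinarith⟩
  rw [(gridPiecewise_eventuallyEq_nhdsGE hΔ hx).derivWithin_eq_of_mem self_mem_Ici,
    hd.derivWithin (uniqueDiffWithinAt_Ici _)]

end GridPiecewise

section TimingSegment

variable {Δ : ℝ}

noncomputable def easeSegment (Δ a b : ℝ) (i : ℤ) (t : ℝ) : ℝ := i + ease a b (t / Δ - i)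

lemma hasDerivAt_easeSegment (a b : ℝ) (i : ℤ) (t : ℝ) :
    HasDerivAt (easeSegment Δ a b i) (easeDeriv a b (t / Δ - i) / Δ) t := by
  have hu : HasDerivAt (fun t : ℝ => t / Δ - i) (1 / Δ) t :=
    ((hasDerivAt_id' t).div_const Δ).sub_const _
  exact (((hasDerivAt_ease a b _).comp t hu).const_add (i : ℝ)).congr_deriv
    (div_eq_mul_one_div _ _).symm

lemma differentiable_easeSegment (a b : ℝ) (i : ℤ) : Differentiable ℝ (easeSegment Δ a b i) :=
  fun t => (hasDerivAt_easeSegment a b i t).differentiableAt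

lemma easeSegment_intCast_mul (hΔ : Δ ≠ 0) (a b : ℝ) (i : ℤ) :
    easeSegment Δ a b i (i * Δ) = i := by
  simp [easeSegment, hΔ]

lemma easeSegment_succ_mul (hΔ : Δ ≠ 0) (a b : ℝ) (i : ℤ) :
    easeSegment Δ a b i ((i + 1) * Δ) = i + 1 := by
  simp [easeSegment, hΔ]

lemma deriv_easeSegment_intCast_mul (hΔ : Δ ≠ 0) (a b : ℝ) (i : ℤ) :
    deriv (easeSegment Δ a b i) (i * Δ) = a / Δ := by
  simp [(hasDerivAt_easeSegment a b i _).deriv, hΔ]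

lemma deriv_easeSegment_succ_mul (hΔ : Δ ≠ 0) (a b : ℝ) (i : ℤ) :
    deriv (easeSegment Δ a b i) ((i + 1) * Δ) = b / Δ := by
  simp [(hasDerivAt_easeSegment a b i _).deriv, hΔ]

variable (β : ℝ)

noncomputable def timingSegment (Δ : ℝ) (i : ℤ) : ℝ → ℝ :=
  if Even i then easeSegment Δ (1 - β) (1 + β) i else easeSegment Δ (1 + β) (1 - β) i

lemma differentiable_timingSegment (i : ℤ) : Differentiable ℝ (timingSegment β Δ i) := by
  unfold timingSegment
  split_ifs <;> exact differentiable_easeSegment _ _ i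

lemma timingSegment_intCast_mul (hΔ : Δ ≠ 0) (i : ℤ) : timingSegment β Δ i (i * Δ) = i := by
  unfold timingSegment
  split_ifs <;> exact easeSegment_intCast_mul hΔ _ _ i

lemma timingSegment_glue (hΔ : Δ ≠ 0) (i : ℤ) :
    timingSegment β Δ i ((i + 1) * Δ) = timingSegment β Δ (i + 1) ((i + 1) * Δ) := by
  have := timingSegment_intCast_mul β hΔ (i + 1)
  push_cast at this
  rw [this]
  unfold timingSegment
  split_ifs <;> exact easeSegment_succ_mul hΔ _ _ i

lemma deriv_timingSegment_sub_one (hΔ : Δ ≠ 0) (i : ℤ) :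
    deriv (timingSegment β Δ (i - 1)) (i * Δ) = deriv (timingSegment β Δ i) (i * Δ) := by
  have hleft (a b : ℝ) : deriv (easeSegment Δ a b (i - 1)) (i * Δ) = b / Δ := by
    simpa using deriv_easeSegment_succ_mul hΔ a b (i - 1)
  by_cases hi : Even i
  · have hi' : ¬Even (i - 1) := by simpa [Int.even_sub_one] using hi
    simp only [timingSegment, hi, hi', if_true, if_false, hleft, deriv_easeSegment_intCast_mul hΔ]
  · have hi' : Even (i - 1) := by simpa [Int.even_sub_one] using hi
    simp only [timingSegment, hi, hi', if_true, if_false, hleft, deriv_easeSegment_intCast_mul hΔ]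

end TimingSegment

theorem timing_map_smooth_general (T : ℝ) (hT : 0 < T) (N : ℕ) (hN : 0 < N)
    (β : ℝ)
    (Δ : ℝ) (hΔ : Δ = T / (2 * N)) (f₀ : ℝ → ℝ)
    (hf : ∀ t : ℝ, f₀ t =
      if Even ⌊t / Δ⌋ then
        (⌊t / Δ⌋ : ℝ) + ease (1 - β) (1 + β) (t / Δ - (⌊t / Δ⌋ : ℝ))
      else
        (⌊t / Δ⌋ : ℝ) + ease (1 + β) (1 - β) (t / Δ - (⌊t / Δ⌋ : ℝ))) :
    ContinuousOn f₀ (Set.Icc 0 T) ∧ f₀ 0 = 0 ∧ f₀ T = 2 * N ∧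
    ∀ i : ℕ, 0 < i → i < 2 * N →
      derivWithin f₀ (Set.Iic ((i : ℝ) * Δ)) ((i : ℝ) * Δ) =
      derivWithin f₀ (Set.Ici ((i : ℝ) * Δ)) ((i : ℝ) * Δ) := by
  have hΔpos : 0 < Δ := by rw [hΔ]; positivity
  have hf₀ : f₀ = gridPiecewise Δ (timingSegment β Δ) := by
    funext t
    rw [hf, gridPiecewise, timingSegment]
    split_ifs <;> rfl
  subst hf₀
  have hglue := timingSegment_glue β hΔpos.ne'
  have hvalue (i : ℤ) : gridPiecewise Δ (timingSegment β Δ) (i * Δ) = i :=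
    (gridPiecewise_intCast_mul hΔpos.ne' i).trans (timingSegment_intCast_mul β hΔpos.ne' i)
  refine ⟨(continuous_gridPiecewise hΔpos hglue fun i =>
    (differentiable_timingSegment β i).continuous).continuousOn, ?_, ?_, fun i _ _ => ?_⟩
  · simpa using hvalue 0
  · have hT' : T = ((2 * N : ℤ) : ℝ) * Δ := by
      rw [hΔ]; push_cast; field_simp
    rw [hT', hvalue]
    norm_cast
  · rw [← Int.cast_natCast, derivWithin_gridPiecewise_Iic hΔpos hglue _
      (differentiable_timingSegment β _ _), derivWithin_gridPiecewise_Ici hΔpos _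
      (differentiable_timingSegment β _ _), deriv_timingSegment_sub_one β hΔpos.ne']

theorem timing_map_smooth (T : ℝ) (hT : 0 < T) (N : ℕ) (hN : 0 < N)
    (β : ℝ) (hβ : β ∈ Set.Icc (0:ℝ) 1)
    (Δ : ℝ) (hΔ : Δ = T / (2 * N)) (f₀ : ℝ → ℝ)
    (hf : ∀ t : ℝ, f₀ t =
      if Even ⌊t / Δ⌋ then
        (⌊t / Δ⌋ : ℝ) + ease (1 - β) (1 + β) (t / Δ - (⌊t / Δ⌋ : ℝ))
      else
        (⌊t / Δ⌋ : ℝ) + ease (1 + β) (1 - β) (t / Δ - (⌊t / Δ⌋ : ℝ))) :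
    ContinuousOn f₀ (Set.Icc 0 T) ∧ f₀ 0 = 0 ∧ f₀ T = 2 * N ∧
    ∀ i : ℕ, 0 < i → i < 2 * N →
      derivWithin f₀ (Set.Iic ((i : ℝ) * Δ)) ((i : ℝ) * Δ) =
      derivWithin f₀ (Set.Ici ((i : ℝ) * Δ)) ((i : ℝ) * Δ) :=
  timing_map_smooth_general T hT N hN β Δ hΔ f₀ hf
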